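/- Effects of residuation on causality: let C = ⟨E, X⟩ be a stable configuration structure over a countable set E, x ∈ X a finite configuration, and σ_x : Pr(C) → Pr(x⊙C) the residuation map. For all distinct complete primes p, q ∈ Pr(C) with p ⊆ q: (i) if q ⊆ x then σ_x(q) ⊆ σ_x(p); (ii) if p ⊄ x and q ⊄ x then σ_x(p) ⊆ σ_x(q); (iii) if p ⊆ x and q ⊄ x then σ_x(p) and σ_x(q) are incompatible in x⊙C (have no least upper bound). -/
import Mathlib


/-- A configuration structure over `E` is a set `X` of subsets of `E` (its configurations).
    It is rooted when `∅ ∈ X`. -/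
def Rooted {E : Type*} (X : Set (Set E)) : Prop := ∅ ∈ X

/-- Connectedness (restricted to finite configurations). -/
def ConnectedCS {E : Type*} (X : Set (Set E)) : Prop :=
  ∀ x ∈ X, x.Finite → x ≠ ∅ → ∃ a ∈ x, x \ {a} ∈ X

/-- Closure under bounded unions. -/
def ClosedBU {E : Type*} (X : Set (Set E)) : Prop :=
  ∀ x ∈ X, ∀ y ∈ X, ∀ z ∈ X, x ∪ y ⊆ z → x ∪ y ∈ X

/-- Closure under (binary) intersections. -/
def ClosedInter {E : Type*} (X : Set (Set E)) : Prop :=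
  ∀ x ∈ X, ∀ y ∈ X, x ∩ y ∈ X

/-- Coherence of a configuration structure. -/
def CoherentCS {E : Type*} (X : Set (Set E)) : Prop :=
  ∀ x ∈ X, ∀ y ∈ X, ∀ z ∈ X,
    (∃ z' ∈ X, x ∪ y ⊆ z') → (∃ z'' ∈ X, y ∪ z ⊆ z'') → (∃ z''' ∈ X, x ∪ z ⊆ z''') →
    x ∪ y ∪ z ∈ X

/-- Stability of a configuration structure. -/
def StableCS {E : Type*} (X : Set (Set E)) : Prop :=
  Rooted X ∧ ConnectedCS X ∧ ClosedBU X ∧ ClosedInter X ∧ CoherentCS X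

/-- The residual `x·C`: configurations `y \ x` for `y ∈ X` with `x ⊆ y`. -/
def res {E : Type*} (x : Set E) (X : Set (Set E)) : Set (Set E) :=
  {z | ∃ y ∈ X, x ⊆ y ∧ z = y \ x}

/-- The symmetric residual `x⊙C`: configurations `y ∆ x` for `y ∈ X`. -/
def symres {E : Type*} (x : Set E) (X : Set (Set E)) : Set (Set E) :=
  {z | ∃ y ∈ X, z = symmDiff y x}

/-- `s` is the least upper bound of `Y` in the partial order `(X, ⊆)`. -/
def IsLubIn {E : Type*} (X Y : Set (Set E)) (s : Set E) : Prop :=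
  s ∈ X ∧ (∀ y ∈ Y, y ⊆ s) ∧ ∀ t ∈ X, (∀ y ∈ Y, y ⊆ t) → s ⊆ t

/-- `Y` is consistent in `(X, ⊆)`: it has a least upper bound in `X`. -/
def ConsistentIn {E : Type*} (X Y : Set (Set E)) : Prop := ∃ s, IsLubIn X Y s

/-- `Y` is pairwise consistent in `(X, ⊆)`. -/
def PairwiseConsistentIn {E : Type*} (X Y : Set (Set E)) : Prop :=
  Y.Nonempty ∧ ∀ a ∈ Y, ∀ b ∈ Y, a ≠ b → ConsistentIn X {a, b}

/-- `Y` is directed in `(X, ⊆)`: nonempty and its lub exists and belongs to `Y`. -/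
def DirectedIn {E : Type*} (X Y : Set (Set E)) : Prop :=
  Y.Nonempty ∧ ∃ s ∈ Y, IsLubIn X Y s

/-- Two configurations are compatible when `{u, v}` has a least upper bound in `(X, ⊆)`. -/
def Compatible {E : Type*} (X : Set (Set E)) (u v : Set E) : Prop :=
  ConsistentIn X {u, v}

/-- Orthogonality: compatible and inclusion-incomparable. -/
def Orthogonal {E : Type*} (X : Set (Set E)) (u v : Set E) : Prop :=
  Compatible X u v ∧ ¬ u ⊆ v ∧ ¬ v ⊆ u

/-- `x` is a compact element of `(X, ⊆)`. -/
def CompactIn {E : Type*} (X : Set (Set E)) (x : Set E) : Prop :=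
  x ∈ X ∧ ∀ Y ⊆ X, DirectedIn X Y → ∀ s, IsLubIn X Y s → x ⊆ s → ∃ y ∈ Y, x ⊆ y

/-- `p` is a complete prime of `(X, ⊆)`. -/
def CompletePrimeIn {E : Type*} (X : Set (Set E)) (p : Set E) : Prop :=
  p ∈ X ∧ ∀ Y ⊆ X, PairwiseConsistentIn X Y → ∀ s, IsLubIn X Y s → p ⊆ s → ∃ y ∈ Y, p ⊆ y

/-- `y` is an immediate predecessor of `p` in `(X, ⊆)`:
    a maximal element of `{z ∈ X | z ⊊ p}`. -/
def IsMaxPred {E : Type*} (X : Set (Set E)) (p y : Set E) : Prop :=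
  y ∈ X ∧ y ⊂ p ∧ ∀ z ∈ X, z ⊂ p → y ⊆ z → z = y

/-- The complete prime `p` introduces event `a` in `C = ⟨E, X⟩`:
    `p \ pred(p) = {a}` for an immediate predecessor `pred(p)` of `p`
    (i.e. the derivative `δ_C(p)` of `p` is `a`). -/
def IntroducesIn {E : Type*} (X : Set (Set E)) (p : Set E) (a : E) : Prop :=
  CompletePrimeIn X p ∧ ∃ y, IsMaxPred X p y ∧ p \ y = {a}

/-- `p'` is the image of `p` under the residuation map `σ : Pr(C) → Pr(C')`,
    i.e. `p` and `p'` introduce the same event (`δ_{C'}(p') = δ_C(p)`). -/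
def SameIntro {E : Type*} (X X' : Set (Set E)) (p p' : Set E) : Prop :=
  ∃ a, IntroducesIn X p a ∧ IntroducesIn X' p' a

/-- `↓x_C`: the complete primes of `C` included in `x`. -/
def downPr {E : Type*} (X : Set (Set E)) (x : Set E) : Set (Set E) :=
  {p | CompletePrimeIn X p ∧ p ⊆ x}

/-- Causality relation of the switch `↓x_C ⊙ E(C)`. -/
def ltSwitch {E : Type*} (X : Set (Set E)) (x : Set E) (p q : Set E) : Prop :=
  (p ⊆ q ∧ p ∉ downPr X x ∧ q ∉ downPr X x) ∨
  (q ⊆ p ∧ p ∈ downPr X x ∧ q ∈ downPr X x) ∨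
  (¬ Compatible X p q ∧ p ∈ downPr X x)

/-- Conflict relation of the switch `↓x_C ⊙ E(C)`. -/
def cfSwitch {E : Type*} (X : Set (Set E)) (x : Set E) (p q : Set E) : Prop :=
  (¬ Compatible X p q ∧ p ∉ downPr X x ∧ q ∉ downPr X x) ∨
  (p ⊆ q ∧ p ∈ downPr X x ∧ q ∉ downPr X x)

/-- The event introduced by a complete prime belongs to it. -/
lemma mem_of_introduces {E : Type*} {X : Set (Set E)} {p : Set E} {a : E}
    (h : IntroducesIn X p a) : a ∈ p := by
  obtain ⟨-, y, -, hdiff⟩ := h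
  have : a ∈ p \ y := by rw [hdiff]; exact rfl
  exact this.1

/-- Key lemma: a complete prime introducing `a` is the minimum configuration
    containing `a` (uses closure under intersections and bounded unions). -/
lemma introduces_subset {E : Type*} {X : Set (Set E)}
    (hInt : ClosedInter X) (hBU : ClosedBU X) {p : Set E} {a : E}
    (h : IntroducesIn X p a) : ∀ z ∈ X, a ∈ z → p ⊆ z := by
  obtain ⟨⟨hpX, hprime⟩, y, ⟨hyX, hyp, hymax⟩, hdiff⟩ := h
  have hmem : a ∈ p \ y := by rw [hdiff]; exact rfl
  have hap : a ∈ p := hmem.1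
  have hay : a ∉ y := hmem.2
  intro z hz haz
  have hpz : p ∩ z ∈ X := hInt p hpX z hz
  have hup : y ∪ (p ∩ z) ⊆ p := Set.union_subset hyp.1 Set.inter_subset_left
  have huX : y ∪ (p ∩ z) ∈ X := hBU y hyX _ hpz p hpX hup
  have hue : y ∪ (p ∩ z) = p := by
    by_contra hne
    have heq : y ∪ (p ∩ z) = y :=
      hymax _ huX (Set.ssubset_iff_subset_ne.mpr ⟨hup, hne⟩) Set.subset_union_left
    exact hay (heq ▸ (Or.inr ⟨hap, haz⟩ : a ∈ y ∪ (p ∩ z)))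
  have hYsub : ({y, p ∩ z} : Set (Set E)) ⊆ X := by rintro w (rfl | rfl) <;> assumption
  have hub : ∀ w ∈ ({y, p ∩ z} : Set (Set E)), w ⊆ p := by
    rintro w (rfl | rfl)
    exacts [hyp.1, Set.inter_subset_left]
  have hleast : ∀ t ∈ X, (∀ w ∈ ({y, p ∩ z} : Set (Set E)), w ⊆ t) → p ⊆ t := by
    intro t _ hwt
    rw [← hue]
    exact Set.union_subset (hwt y (by simp)) (hwt _ (by simp))
  have hlub : IsLubIn X {y, p ∩ z} p := ⟨hpX, hub, hleast⟩
  have hpc : PairwiseConsistentIn X {y, p ∩ z} := by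
    refine ⟨⟨y, by simp⟩, ?_⟩
    intro a' ha' b' hb' hab
    refine ⟨p, hpX, ?_, ?_⟩
    · rintro w (rfl | rfl)
      exacts [hub _ ha', hub _ hb']
    · intro t _ hwt
      have h1 : y ⊆ t ∧ p ∩ z ⊆ t := by
        rcases ha' with rfl | rfl <;> rcases hb' with rfl | rfl
        · exact absurd rfl hab
        · exact ⟨hwt _ (by simp), hwt _ (by simp)⟩
        · exact ⟨hwt _ (by simp), hwt _ (by simp)⟩
        · exact absurd rfl hab
      rw [← hue]
      exact Set.union_subset h1.1 h1.2
  obtain ⟨w, hw, hpw⟩ := hprime _ hYsub hpc p hlub subset_rfl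
  rcases hw with rfl | rfl
  · exact absurd (le_antisymm hyp.le hpw) hyp.ne
  · exact hpw.trans Set.inter_subset_right

/-- The symmetric residual is closed under binary intersections. -/
lemma symres_closedInter {E : Type*} {X : Set (Set E)} (hInt : ClosedInter X)
    (hBU : ClosedBU X) (hCoh : CoherentCS X) {x : Set E} (hx : x ∈ X) :
    ClosedInter (symres x X) := by
  rintro z1 ⟨y1, hy1, rfl⟩ z2 ⟨y2, hy2, rfl⟩
  refine ⟨((x ∩ y1) ∪ (x ∩ y2)) ∪ (y1 ∩ y2), ?_, ?_⟩
  · exact hCoh (x ∩ y1) (hInt x hx y1 hy1) (x ∩ y2) (hInt x hx y2 hy2)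
      (y1 ∩ y2) (hInt y1 hy1 y2 hy2)
      ⟨x, hx, Set.union_subset Set.inter_subset_left Set.inter_subset_left⟩
      ⟨y2, hy2, Set.union_subset Set.inter_subset_right Set.inter_subset_right⟩
      ⟨y1, hy1, Set.union_subset Set.inter_subset_right Set.inter_subset_left⟩
  · ext e
    simp only [Set.mem_inter_iff, Set.mem_symmDiff, Set.mem_union]
    tauto

/-- The symmetric residual is closed under bounded unions. -/
lemma symres_closedBU {E : Type*} {X : Set (Set E)} (hInt : ClosedInter X)
    (hBU : ClosedBU X) (hCoh : CoherentCS X) {x : Set E} (hx : x ∈ X) :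
    ClosedBU (symres x X) := by
  rintro z1 ⟨y1, hy1, rfl⟩ z2 ⟨y2, hy2, rfl⟩ z3 ⟨y3, hy3, rfl⟩ hsub
  refine ⟨((y1 ∩ y3) ∪ (y2 ∩ y3)) ∪ ((x ∩ y1) ∩ y2), ?_, ?_⟩
  · exact hCoh (y1 ∩ y3) (hInt y1 hy1 y3 hy3) (y2 ∩ y3) (hInt y2 hy2 y3 hy3)
      ((x ∩ y1) ∩ y2) (hInt _ (hInt x hx y1 hy1) y2 hy2)
      ⟨y3, hy3, Set.union_subset Set.inter_subset_right Set.inter_subset_right⟩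
      ⟨y2, hy2, Set.union_subset Set.inter_subset_left Set.inter_subset_right⟩
      ⟨y1, hy1, Set.union_subset Set.inter_subset_left
        (Set.inter_subset_left.trans Set.inter_subset_right)⟩
  · ext e
    have h := @hsub e
    simp only [Set.mem_union, Set.mem_inter_iff, Set.mem_symmDiff] at h ⊢
    by_cases hex : e ∈ x <;> by_cases h1 : e ∈ y1 <;> by_cases h2 : e ∈ y2 <;>
      simp [hex, h1, h2] at h ⊢ <;> tauto

/-- Effects of residuation on causality: for distinct complete
    primes `p ⊆ q` of a stable `C`, (i) if `q ⊆ x` then `σ_x(q) ⊆ σ_x(p)`;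
    (ii) if `p ⊄ x` and `q ⊄ x` then `σ_x(p) ⊆ σ_x(q)`; (iii) if `p ⊆ x` and
    `q ⊄ x` then `σ_x(p)` and `σ_x(q)` are incompatible in `x⊙C`. -/
theorem residuation_effect_on_causality {E : Type*} [Countable E]
    (X : Set (Set E)) (hX : StableCS X) (x : Set E) (hx : x ∈ X) (hxfin : x.Finite)
    (p q : Set E) (hp : CompletePrimeIn X p) (hq : CompletePrimeIn X q)
    (hne : p ≠ q) (hsub : p ⊆ q) :
    ∀ p' q', SameIntro X (symres x X) p p' → SameIntro X (symres x X) q q' →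
      (q ⊆ x → q' ⊆ p') ∧
      ((¬ p ⊆ x ∧ ¬ q ⊆ x) → p' ⊆ q') ∧
      ((p ⊆ x ∧ ¬ q ⊆ x) → ¬ Compatible (symres x X) p' q') := by
  obtain ⟨-, -, hBU, hInt, hCoh⟩ := hX
  intro p' q' hsp hsq
  obtain ⟨a, hpa, hp'a⟩ := hsp
  obtain ⟨b, hqb, hq'b⟩ := hsq
  have hInt' := symres_closedInter hInt hBU hCoh hx
  have hBU' := symres_closedBU hInt hBU hCoh hx
  have minP := introduces_subset hInt hBU hpa
  have minQ := introduces_subset hInt hBU hqb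
  have minP' := introduces_subset hInt' hBU' hp'a
  have minQ' := introduces_subset hInt' hBU' hq'b
  have hap : a ∈ p := mem_of_introduces hpa
  have hbq : b ∈ q := mem_of_introduces hqb
  have hap' : a ∈ p' := mem_of_introduces hp'a
  have hbq' : b ∈ q' := mem_of_introduces hq'b
  obtain ⟨yp, hypX, hp'eq⟩ := hp'a.1.1
  obtain ⟨yq, hyqX, hq'eq⟩ := hq'b.1.1
  refine ⟨?_, ?_, ?_⟩
  · -- (i) q ⊆ x → q' ⊆ p'
    intro hqx
    have hax : a ∈ x := hqx (hsub hap)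
    have hbx : b ∈ x := hqx hbq
    have hbp' : b ∈ p' := by
      rw [hp'eq] at hap' ⊢
      rw [Set.mem_symmDiff] at hap' ⊢
      have hayp : a ∉ yp := by
        rcases hap' with ⟨_, h⟩ | ⟨_, h⟩
        · exact absurd hax h
        · exact h
      have hbyp : b ∉ yp := fun hb => hayp (minQ yp hypX hb (hsub hap))
      exact Or.inr ⟨hbx, hbyp⟩
    exact minQ' p' ⟨yp, hypX, hp'eq⟩ hbp'
  · -- (ii) p ⊄ x, q ⊄ x → p' ⊆ q'
    rintro ⟨hpx, hqx⟩
    have hax : a ∉ x := fun h => hpx (minP x hx h)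
    have hbx : b ∉ x := fun h => hqx (minQ x hx h)
    have haq' : a ∈ q' := by
      rw [hq'eq] at hbq' ⊢
      rw [Set.mem_symmDiff] at hbq' ⊢
      have hbyq : b ∈ yq := by
        rcases hbq' with ⟨h, _⟩ | ⟨h, _⟩
        · exact h
        · exact absurd h hbx
      exact Or.inl ⟨minQ yq hyqX hbyq (hsub hap), hax⟩
    exact minP' q' ⟨yq, hyqX, hq'eq⟩ haq'
  · -- (iii) p ⊆ x, q ⊄ x → incompatible
    rintro ⟨hpx, hqx⟩ ⟨s, hsX, hub, -⟩
    obtain ⟨ys, hysX, rfl⟩ := hsX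
    have hax : a ∈ x := hpx hap
    have hbx : b ∉ x := fun h => hqx (minQ x hx h)
    have has : a ∈ symmDiff ys x := hub p' (by simp) hap'
    have hbs : b ∈ symmDiff ys x := hub q' (by simp) hbq'
    rw [Set.mem_symmDiff] at has hbs
    have hays : a ∉ ys := by
      rcases has with ⟨_, h⟩ | ⟨_, h⟩
      · exact absurd hax h
      · exact h
    have hbys : b ∈ ys := by
      rcases hbs with ⟨h, _⟩ | ⟨h, _⟩
      · exact h
      · exact absurd h hbx
    exact hays (minQ ys hysX hbys (hsub hap))
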